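/- The closed-form lazy potential for HARMONIC with two servers satisfies its defining recurrence: let (M,d) be a metric space and let x, y, z ∈ M be pairwise distinct. Then Φ(x,y,z) = 2·d(x,y)·d(y,z)/(d(x,y)+d(y,z)) + (d(x,y)/(d(x,y)+d(y,z)))·Φ(x,z,y), where Φ(u,v,w) := 2·d(u,v)·(2·d(u,w)+d(v,w))/(d(u,v)+d(u,w)+d(v,w)). -/

import Mathlib

/-! Writing `a = d(x,y)`, `b = d(x,z)`, `c = d(y,z)`, the recurrence is an identity of rational
functions in `a, b, c`: after clearing the denominators `a + c` and `a + b + c` both sides become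
`2a(2ab + 2bc + ac + c²)`. Since `x ≠ y`, both denominators are positive. -/

/-- The lazy potential for HARMONIC with two servers:
`Φ(u,v,w) = 2·d(u,v)·(2·d(u,w) + d(v,w)) / (d(u,v) + d(u,w) + d(v,w))`. -/
noncomputable def lazyPhi {M : Type*} [MetricSpace M] (u v w : M) : ℝ :=
  2 * dist u v * (2 * dist u w + dist v w) / (dist u v + dist u w + dist v w)

theorem lazyPhi_formula_recurrence {a b c : ℝ} (hac : a + c ≠ 0) (habc : a + b + c ≠ 0) :
    2 * a * (2 * b + c) / (a + b + c)
      = 2 * a * c / (a + c) + a / (a + c) * (2 * b * (2 * a + c) / (b + a + c)) := by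
  have hbac : b + a + c ≠ 0 := by rwa [add_comm b a]
  field_simp
  ring

theorem lazyPhi_recurrence_general {M : Type*} [MetricSpace M] (x y z : M)
    (hxy : x ≠ y) :
    lazyPhi x y z
      = 2 * dist x y * dist y z / (dist x y + dist y z)
        + dist x y / (dist x y + dist y z) * lazyPhi x z y := by
  have hxy_pos : 0 < dist x y := dist_pos.2 hxy
  unfold lazyPhi
  rw [dist_comm z y]
  exact lazyPhi_formula_recurrence (by positivity) (by positivity)

/-- The closed-form lazy potential satisfies its defining recurrence:
`Φ(x,y,z) = 2·d(x,y)·d(y,z)/(d(x,y)+d(y,z))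
  + (d(x,y)/(d(x,y)+d(y,z)))·Φ(x,z,y)` for pairwise distinct `x, y, z`. -/
theorem lazyPhi_recurrence {M : Type*} [MetricSpace M] (x y z : M)
    (hxy : x ≠ y) (hxz : x ≠ z) (hyz : y ≠ z) :
    lazyPhi x y z
      = 2 * dist x y * dist y z / (dist x y + dist y z)
        + dist x y / (dist x y + dist y z) * lazyPhi x z y :=
  lazyPhi_recurrence_general x y z hxy
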